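/- arXiv:2309.01827 — 8 statements merged into one kernel-verified Lean document; each statement's English description precedes it below -/
import Mathlib

section
/- Assume additionally f(0) = 0 and fix L ∈ ℝ^d. For each S > 0 let Z^{(S)} : [0,S] → ℝ^d be a continuous function satisfying Z^{(S)}_0 = 0 and Z^{(S)}_t = ∫₀ᵗ ( f(Z^{(S)}_u) + S^{-1} L ) du for all t ∈ [0,S]. Then lim_{T→0⁺} sup_{0 < S ≤ T} sup_{0 ≤ t ≤ S} ‖Z^{(S)}_t − t S^{-1} Z^{(S)}_S‖ = 0; that is, as T → 0⁺ these trajectories become uniformly close to straight lines. -/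
/-!
Writing `Z t = ∫₀ᵗ f (Z u) du + (t / S) • L`, the deviation `Z t - (t / S) • Z S` equals
`∫₀ᵗ f (Z u) du - (t / S) • ∫₀^S f (Z u) du`, which is at most `2 K S M` for `M = max ‖Z‖`.
Evaluating the first identity at a maximiser of `‖Z‖` gives `M ≤ K S M + ‖L‖`, so `M ≤ 2 ‖L‖`
once `K S ≤ 1/2`. Hence the deviation is `O(S)`, uniformly in `t`.
-/

open Filter Set NNReal

section IntegralEquation

variable {E : Type*} [NormedAddCommGroup E] [NormedSpace ℝ E]
  {f : E → E} {K : ℝ≥0} {Z : ℝ → E} {L : E} {S t : ℝ}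

lemma eq_integral_add_div_smul [CompleteSpace E] (hf : Continuous f)
    (hZc : ContinuousOn Z (Icc 0 S))
    (hZ : ∀ t ∈ Icc 0 S, Z t = ∫ u in (0:ℝ)..t, (f (Z u) + S⁻¹ • L))
    (ht : t ∈ Icc 0 S) :
    Z t = (∫ u in (0:ℝ)..t, f (Z u)) + (t / S) • L := by
  have hint : IntervalIntegrable (fun u => f (Z u)) MeasureTheory.volume 0 t := by
    refine (hf.comp_continuousOn hZc |>.mono ?_).intervalIntegrable
    rw [uIcc_of_le ht.1]
    exact Icc_subset_Icc le_rfl ht.2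
  rw [hZ t ht, intervalIntegral.integral_add hint intervalIntegrable_const,
    intervalIntegral.integral_const, smul_smul, sub_zero, div_eq_mul_inv]

lemma norm_integral_comp_le (hf : LipschitzWith K f) (hf0 : f 0 = 0) {M : ℝ}
    (hM : ∀ u ∈ Icc 0 S, ‖Z u‖ ≤ M) (ht : t ∈ Icc 0 S) :
    ‖∫ u in (0:ℝ)..t, f (Z u)‖ ≤ K * M * t := by
  have hbound : ∀ u ∈ uIoc 0 t, ‖f (Z u)‖ ≤ K * M := by
    intro u hu
    rw [uIoc_of_le ht.1] at hu
    exact (hf.norm_le_mul hf0 _).trans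
      (mul_le_mul_of_nonneg_left (hM u ⟨hu.1.le, hu.2.trans ht.2⟩) K.2)
  simpa [abs_of_nonneg ht.1] using intervalIntegral.norm_integral_le_of_norm_le_const hbound

lemma norm_le_two_mul_of_eq_integral [CompleteSpace E] (hf : LipschitzWith K f)
    (hf0 : f 0 = 0) (hS : 0 < S) (hKS : K * S ≤ 1 / 2) (hZc : ContinuousOn Z (Icc 0 S))
    (hZ : ∀ t ∈ Icc 0 S, Z t = ∫ u in (0:ℝ)..t, (f (Z u) + S⁻¹ • L))
    (ht : t ∈ Icc 0 S) :
    ‖Z t‖ ≤ 2 * ‖L‖ := by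
  obtain ⟨t₀, ht₀, hmax⟩ :=
    isCompact_Icc.exists_isMaxOn (nonempty_Icc.2 hS.le) hZc.norm
  have hM : ∀ u ∈ Icc 0 S, ‖Z u‖ ≤ ‖Z t₀‖ := fun u hu => hmax hu
  have hrec : ‖Z t₀‖ ≤ K * ‖Z t₀‖ * t₀ + ‖L‖ :=
    calc ‖Z t₀‖ = ‖(∫ u in (0:ℝ)..t₀, f (Z u)) + (t₀ / S) • L‖ := by
          rw [← eq_integral_add_div_smul hf.continuous hZc hZ ht₀]
      _ ≤ ‖∫ u in (0:ℝ)..t₀, f (Z u)‖ + (t₀ / S) * ‖L‖ := by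
          refine (norm_add_le _ _).trans_eq ?_
          rw [norm_smul, Real.norm_of_nonneg (div_nonneg ht₀.1 hS.le)]
      _ ≤ K * ‖Z t₀‖ * t₀ + 1 * ‖L‖ := by
          gcongr
          · exact norm_integral_comp_le hf hf0 hM ht₀
          · exact (div_le_one hS).2 ht₀.2
      _ = K * ‖Z t₀‖ * t₀ + ‖L‖ := by ring
  have hsmall : K * ‖Z t₀‖ * t₀ ≤ ‖Z t₀‖ / 2 := by
    have : (K : ℝ) * t₀ ≤ 1 / 2 := le_trans (by gcongr; exact ht₀.2) hKS
    nlinarith [norm_nonneg (Z t₀)]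
  linarith [hM t ht]

theorem norm_sub_div_smul_le_of_eq_integral [CompleteSpace E] (hf : LipschitzWith K f)
    (hf0 : f 0 = 0) (hS : 0 < S) (hKS : K * S ≤ 1 / 2) (hZc : ContinuousOn Z (Icc 0 S))
    (hZ : ∀ t ∈ Icc 0 S, Z t = ∫ u in (0:ℝ)..t, (f (Z u) + S⁻¹ • L))
    (ht : t ∈ Icc 0 S) :
    ‖Z t - (t / S) • Z S‖ ≤ 4 * K * ‖L‖ * S := by
  have hSS : S ∈ Icc 0 S := ⟨hS.le, le_rfl⟩
  have hM : ∀ u ∈ Icc 0 S, ‖Z u‖ ≤ 2 * ‖L‖ := fun u hu =>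
    norm_le_two_mul_of_eq_integral hf hf0 hS hKS hZc hZ hu
  have hdev : Z t - (t / S) • Z S
      = (∫ u in (0:ℝ)..t, f (Z u)) - (t / S) • ∫ u in (0:ℝ)..S, f (Z u) := by
    rw [eq_integral_add_div_smul hf.continuous hZc hZ ht,
      eq_integral_add_div_smul hf.continuous hZc hZ hSS, div_self hS.ne']
    module
  calc ‖Z t - (t / S) • Z S‖
      ≤ ‖∫ u in (0:ℝ)..t, f (Z u)‖ + (t / S) * ‖∫ u in (0:ℝ)..S, f (Z u)‖ := by
        rw [hdev]
        refine (norm_sub_le _ _).trans_eq ?_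
        rw [norm_smul, Real.norm_of_nonneg (div_nonneg ht.1 hS.le)]
    _ ≤ K * (2 * ‖L‖) * S + 1 * (K * (2 * ‖L‖) * S) := by
        gcongr
        · exact (norm_integral_comp_le hf hf0 hM ht).trans (by gcongr; exact ht.2)
        · exact (div_le_one hS).2 ht.2
        · exact norm_integral_comp_le hf hf0 hM hSS
    _ = 4 * K * ‖L‖ * S := by ring

end IntegralEquation

theorem stmt2_general (d : ℕ)
    (f : EuclideanSpace ℝ (Fin d) → EuclideanSpace ℝ (Fin d))
    (Cf : ℝ) (hCf : 0 < Cf)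
    (hf : ∀ x y : EuclideanSpace ℝ (Fin d), ‖f x - f y‖ ≤ Cf * ‖x - y‖)
    (hf0 : f 0 = 0)
    (L : EuclideanSpace ℝ (Fin d))
    (Z : ℝ → ℝ → EuclideanSpace ℝ (Fin d))
    (hZcont : ∀ S : ℝ, 0 < S → ContinuousOn (Z S) (Set.Icc 0 S))
    (hZeq : ∀ S : ℝ, 0 < S → ∀ t ∈ Set.Icc (0:ℝ) S,
      Z S t = ∫ u in (0:ℝ)..t, (f (Z S u) + S⁻¹ • L)) :
    Tendsto (fun T : ℝ =>
        ⨆ S : {S : ℝ // 0 < S ∧ S ≤ T}, ⨆ t : Set.Icc (0:ℝ) S.1,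
          ‖Z S.1 t - ((t : ℝ) / S.1) • Z S.1 S.1‖)
      (nhdsWithin 0 (Set.Ioi 0)) (nhds 0) := by
  have hlip : LipschitzWith ⟨Cf, hCf.le⟩ f :=
    LipschitzWith.of_dist_le_mul fun x y => by
      rw [dist_eq_norm, dist_eq_norm]
      exact hf x y
  have hbound : ∀ T ∈ Ioo 0 (1 / (2 * Cf)),
      (⨆ S : {S : ℝ // 0 < S ∧ S ≤ T}, ⨆ t : Icc (0:ℝ) S.1,
        ‖Z S.1 t - ((t : ℝ) / S.1) • Z S.1 S.1‖) ≤ 4 * Cf * ‖L‖ * T := by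
    intro T ⟨hT0, hT⟩
    have hnn : 0 ≤ 4 * Cf * ‖L‖ * T := by positivity
    refine Real.iSup_le (fun ⟨S, hS0, hST⟩ => Real.iSup_le (fun t => ?_) hnn) hnn
    have hCfS : Cf * S ≤ 1 / 2 := by
      have := (lt_div_iff₀ (by positivity)).1 (hST.trans_lt hT)
      linarith
    refine (norm_sub_div_smul_le_of_eq_integral hlip hf0 hS0 hCfS (hZcont S hS0)
      (hZeq S hS0) t.2).trans (mul_le_mul_of_nonneg_left hST (by positivity))
  refine squeeze_zero' (Eventually.of_forall fun T =>
      Real.iSup_nonneg fun _ => Real.iSup_nonneg fun _ => norm_nonneg _)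
    (mem_of_superset (Ioo_mem_nhdsGT (by positivity)) hbound)
    ((continuous_const.mul continuous_id).tendsto' 0 0 (by simp) |>.mono_left nhdsWithin_le_nhds)

/-- Short-time trajectories of `dZ/dt = f(Z) + L/S` are asymptotically
straight lines. Assuming `f 0 = 0`, for each `S > 0` let `Z S : [0,S] → ℝ^d` be continuous
with `Z S 0 = 0` and `Z S t = ∫₀ᵗ (f (Z S u) + S⁻¹ • L) du` on `[0,S]`. Then
`sup_{0 < S ≤ T} sup_{0 ≤ t ≤ S} ‖Z S t − (t/S) • Z S S‖ → 0` as `T → 0⁺`. -/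
theorem stmt2 (d : ℕ) (hd : 0 < d)
    (f : EuclideanSpace ℝ (Fin d) → EuclideanSpace ℝ (Fin d))
    (Cf : ℝ) (hCf : 0 < Cf)
    (hf : ∀ x y : EuclideanSpace ℝ (Fin d), ‖f x - f y‖ ≤ Cf * ‖x - y‖)
    (hf0 : f 0 = 0)
    (L : EuclideanSpace ℝ (Fin d))
    (Z : ℝ → ℝ → EuclideanSpace ℝ (Fin d))
    (hZcont : ∀ S : ℝ, 0 < S → ContinuousOn (Z S) (Set.Icc 0 S))
    (hZ0 : ∀ S : ℝ, 0 < S → Z S 0 = 0)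
    (hZeq : ∀ S : ℝ, 0 < S → ∀ t ∈ Set.Icc (0:ℝ) S,
      Z S t = ∫ u in (0:ℝ)..t, (f (Z S u) + S⁻¹ • L)) :
    Tendsto (fun T : ℝ =>
        ⨆ S : {S : ℝ // 0 < S ∧ S ≤ T}, ⨆ t : Set.Icc (0:ℝ) S.1,
          ‖Z S.1 t - ((t : ℝ) / S.1) • Z S.1 S.1‖)
      (nhdsWithin 0 (Set.Ioi 0)) (nhds 0) :=
  stmt2_general d f Cf hCf hf hf0 L Z hZcont hZeq
end

section
/- Let 0 ≤ b and V > 0 with b + ζ/2 < V for some ζ ∈ (0,1), and let 0 < δ < ζ/8. For ε > 0 set p_ε = exp(−(V+δ)/ε), q_ε = exp(−(V−δ)/ε), and I_ε = { j ∈ ℤ, j ≥ 1 : ε log j ∈ [b − ζ/4, b + ζ/4] }. Then for all sufficiently small ε > 0: Σ_{j ∈ I_ε} q_ε (1 − p_ε)^{j−1} ≤ exp( (b − V + ζ/2)/ε ) and Σ_{j ∈ I_ε} p_ε (1 − q_ε)^{j−1} ≥ exp( (b − V − ζ/2)/ε ). -/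
/-!
Write `A = exp ((b - ζ/4)/ε)` and `B = exp ((b + ζ/4)/ε)`. The index set is exactly the integer
interval `[⌈A⌉, ⌊B⌋]`, which has between `B/2` and `B` elements for small `ε` because
`A / B = exp (-(ζ/2)/ε) → 0`. In the first sum every term is at most `q_ε`, so the sum is at most
`B q_ε`. In the second, every index satisfies `j q_ε ≤ B q_ε = exp ((b + ζ/4 - V + δ)/ε) ≤ 1/2`,
so by Bernoulli's inequality every term is at least `p_ε / 2` and the sum is at least `B p_ε / 4`.
Since `δ < ζ/8`, the exponents `b + ζ/4 - V ± δ` lie strictly between `b - V - ζ/2` and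
`b - V + ζ/2`, and for small `ε` the margin absorbs the constant factors.
-/

open Real Filter Topology Finset

noncomputable def logWindow (ε L U : ℝ) : Finset ℕ :=
  Icc ⌈exp (L / ε)⌉₊ ⌊exp (U / ε)⌋₊

lemma mem_logWindow_iff {ε : ℝ} (hε : 0 < ε) (L U : ℝ) (j : ℕ) :
    j ∈ logWindow ε L U ↔ 1 ≤ j ∧ ε * log j ∈ Set.Icc L U := by
  rw [logWindow, mem_Icc, Nat.ceil_le, Nat.le_floor_iff (exp_pos _).le, Set.mem_Icc]
  constructor
  · rintro ⟨hL, hU⟩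
    have hj0 : (0 : ℝ) < j := (exp_pos _).trans_le hL
    exact ⟨Nat.cast_pos.1 hj0, (div_le_iff₀' hε).1 ((le_log_iff_exp_le hj0).2 hL),
      (le_div_iff₀' hε).1 ((log_le_iff_le_exp hj0).2 hU)⟩
  · rintro ⟨hj, hL, hU⟩
    have hj0 : (0 : ℝ) < j := by exact_mod_cast hj
    exact ⟨(le_log_iff_exp_le hj0).1 ((div_le_iff₀' hε).2 hL),
      (log_le_iff_le_exp hj0).1 ((le_div_iff₀' hε).2 hU)⟩

lemma tsum_subtype_eq_sum_logWindow {ε : ℝ} (hε : 0 < ε) (L U : ℝ) (f : ℕ → ℝ) :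
    ∑' j : {j : ℕ // 1 ≤ j ∧ ε * log j ∈ Set.Icc L U}, f j = ∑ j ∈ logWindow ε L U, f j := by
  rw [← Finset.tsum_subtype]
  exact (Equiv.subtypeEquivRight fun j => (mem_logWindow_iff hε L U j).symm).tsum_eq (fun j => f j)

lemma card_Icc_ceil_floor_le {A B : ℝ} (hA : 0 < A) (hB : 0 ≤ B) :
    ((Icc ⌈A⌉₊ ⌊B⌋₊).card : ℝ) ≤ B := by
  have hcard : (Icc ⌈A⌉₊ ⌊B⌋₊).card ≤ ⌊B⌋₊ := by
    rw [Nat.card_Icc]; have := Nat.ceil_pos.2 hA; omega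
  exact (Nat.cast_le.2 hcard).trans (Nat.floor_le hB)

lemma sub_sub_one_le_card_Icc_ceil_floor {A B : ℝ} (hA : 0 ≤ A) :
    B - A - 1 ≤ ((Icc ⌈A⌉₊ ⌊B⌋₊).card : ℝ) := by
  rw [Nat.card_Icc]
  have h1 := Nat.sub_one_lt_floor B
  have h2 := Nat.ceil_lt_add_one hA
  have h3 : ((⌊B⌋₊ + 1 : ℕ) : ℝ) ≤ ((⌊B⌋₊ + 1 - ⌈A⌉₊ : ℕ) : ℝ) + ⌈A⌉₊ := by
    exact_mod_cast le_tsub_add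
  push_cast at h3
  linarith

lemma sum_mul_one_sub_pow_le_card_mul {p q : ℝ} (s : Finset ℕ) (hp0 : 0 ≤ p) (hp1 : p ≤ 1)
    (hq : 0 ≤ q) : ∑ j ∈ s, q * (1 - p) ^ (j - 1) ≤ s.card * q := by
  rw [← nsmul_eq_mul]
  refine sum_le_card_nsmul s _ _ fun j _ => mul_le_of_le_one_right hq ?_
  exact pow_le_one₀ (by linarith) (by linarith)

lemma card_mul_le_sum_mul_one_sub_pow {p q : ℝ} (s : Finset ℕ) (hp : 0 ≤ p) (hq0 : 0 ≤ q)
    (hq1 : q ≤ 1) (hs : ∀ j ∈ s, (j : ℝ) * q ≤ 1 / 2) :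
    s.card * (p / 2) ≤ ∑ j ∈ s, p * (1 - q) ^ (j - 1) := by
  rw [← nsmul_eq_mul]
  refine card_nsmul_le_sum s _ _ fun j hjs => ?_
  have bernoulli := one_add_mul_le_pow (show -2 ≤ -q by linarith) (j - 1)
  have hj : ((j - 1 : ℕ) : ℝ) ≤ j := by exact_mod_cast Nat.sub_le j 1
  have half_le : 1 / 2 ≤ (1 - q) ^ (j - 1) := by
    rw [← sub_eq_add_neg] at bernoulli
    nlinarith [hs j hjs]
  linarith [mul_le_mul_of_nonneg_left half_le hp]

lemma eventually_le_exp_div {c : ℝ} (hc : 0 < c) (M : ℝ) :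
    ∀ᶠ ε in 𝓝[>] (0 : ℝ), M ≤ exp (c / ε) := by
  simp only [div_eq_mul_inv]
  exact (tendsto_exp_atTop.comp (tendsto_inv_nhdsGT_zero.const_mul_atTop hc)).eventually_ge_atTop M

lemma exp_div_mul_exp_div (x y ε : ℝ) : exp (x / ε) * exp (y / ε) = exp ((x + y) / ε) := by
  rw [← exp_add, add_div]

lemma sum_logWindow_le_exp {b V ζ δ ε : ℝ} (hε : 0 < ε) (hVδ : 0 ≤ V + δ) (hδ : δ ≤ ζ / 4) :
    ∑ j ∈ logWindow ε (b - ζ / 4) (b + ζ / 4),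
        exp (-(V - δ) / ε) * (1 - exp (-(V + δ) / ε)) ^ (j - 1) ≤
      exp ((b - V + ζ / 2) / ε) := by
  have hp : exp (-(V + δ) / ε) ≤ 1 :=
    exp_le_one_iff.2 (div_nonpos_of_nonpos_of_nonneg (by linarith) hε.le)
  calc _ ≤ _ := sum_mul_one_sub_pow_le_card_mul _ (exp_pos _).le hp (exp_pos _).le
    _ ≤ exp ((b + ζ / 4) / ε) * exp (-(V - δ) / ε) := by
      gcongr; exact card_Icc_ceil_floor_le (exp_pos _) (exp_pos _).le
    _ = exp ((b + ζ / 4 - (V - δ)) / ε) := by rw [exp_div_mul_exp_div]; ring_nf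
    _ ≤ _ := by gcongr; linarith

lemma eventually_exp_le_sum_logWindow {b V ζ δ : ℝ} (hb : 0 ≤ b) (hbV : b + ζ / 2 < V)
    (hδ0 : 0 < δ) (hδ : δ < ζ / 8) :
    ∀ᶠ ε in 𝓝[>] (0 : ℝ), exp ((b - V - ζ / 2) / ε) ≤
      ∑ j ∈ logWindow ε (b - ζ / 4) (b + ζ / 4),
        exp (-(V + δ) / ε) * (1 - exp (-(V - δ) / ε)) ^ (j - 1) := by
  filter_upwards [eventually_le_exp_div (c := ζ / 2) (by linarith) 4,
    eventually_le_exp_div (c := b + ζ / 4) (by linarith) 4,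
    eventually_le_exp_div (c := V - δ - (b + ζ / 4)) (by linarith) 2,
    eventually_le_exp_div (c := 3 * ζ / 4 - δ) (by linarith) 4]
    with ε h_ratio h_top h_rate h_gain
  have hAB : exp ((b - ζ / 4) / ε) * exp (ζ / 2 / ε) = exp ((b + ζ / 4) / ε) := by
    rw [exp_div_mul_exp_div]; ring_nf
  have hBq : exp ((b + ζ / 4) / ε) * exp (-(V - δ) / ε) * exp ((V - δ - (b + ζ / 4)) / ε) = 1 := by
    rw [exp_div_mul_exp_div, exp_div_mul_exp_div, ← exp_zero]; ring_nf
  have hBp : exp ((b - V - ζ / 2) / ε) * exp ((3 * ζ / 4 - δ) / ε) =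
      exp ((b + ζ / 4) / ε) * exp (-(V + δ) / ε) := by
    rw [exp_div_mul_exp_div, exp_div_mul_exp_div]; ring_nf
  set A := exp ((b - ζ / 4) / ε)
  set B := exp ((b + ζ / 4) / ε)
  set p := exp (-(V + δ) / ε)
  set q := exp (-(V - δ) / ε)
  have hA : 0 < A := exp_pos _
  have hq : 0 < q := exp_pos _
  have hcard : B / 2 ≤ ((logWindow ε (b - ζ / 4) (b + ζ / 4)).card : ℝ) := by
    have : B - A - 1 ≤ ((logWindow ε (b - ζ / 4) (b + ζ / 4)).card : ℝ) :=
      sub_sub_one_le_card_Icc_ceil_floor hA.le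
    nlinarith
  have hBq_le : B * q ≤ 1 / 2 := by nlinarith [mul_pos (exp_pos ((b + ζ / 4) / ε)) hq]
  have hq1 : q ≤ 1 := by nlinarith
  have hsmall : ∀ j ∈ logWindow ε (b - ζ / 4) (b + ζ / 4), (j : ℝ) * q ≤ 1 / 2 := fun j hj =>
    (mul_le_mul_of_nonneg_right ((Nat.le_floor_iff (exp_pos _).le).1 (mem_Icc.1 hj).2)
      hq.le).trans hBq_le
  calc exp ((b - V - ζ / 2) / ε) ≤ B * p / 4 := by nlinarith [exp_pos ((b - V - ζ / 2) / ε)]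
    _ = B / 2 * (p / 2) := by ring
    _ ≤ _ := by gcongr
    _ ≤ _ := card_mul_le_sum_mul_one_sub_pow _ (exp_pos _).le hq.le hq1 hsmall

theorem stmt4_general (b V ζ δ : ℝ) (hb : 0 ≤ b) (hbV : b + ζ / 2 < V)
    (hδ0 : 0 < δ) (hδ : δ < ζ / 8) :
    ∃ ε₀ > 0, ∀ ε : ℝ, 0 < ε → ε < ε₀ →
      (∑' j : {j : ℕ // 1 ≤ j ∧ ε * Real.log (j : ℕ) ∈ Set.Icc (b - ζ / 4) (b + ζ / 4)},
          Real.exp (-(V - δ) / ε) * (1 - Real.exp (-(V + δ) / ε)) ^ ((j : ℕ) - 1))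
        ≤ Real.exp ((b - V + ζ / 2) / ε) ∧
      Real.exp ((b - V - ζ / 2) / ε) ≤
        (∑' j : {j : ℕ // 1 ≤ j ∧ ε * Real.log (j : ℕ) ∈ Set.Icc (b - ζ / 4) (b + ζ / 4)},
          Real.exp (-(V + δ) / ε) * (1 - Real.exp (-(V - δ) / ε)) ^ ((j : ℕ) - 1)) := by
  obtain ⟨ε₀, hε₀, hlower⟩ := (nhdsGT_basis (0 : ℝ)).eventually_iff.1
    (eventually_exp_le_sum_logWindow hb hbV hδ0 hδ)
  refine ⟨ε₀, hε₀, fun ε hε hεε₀ => ?_⟩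
  exact ⟨(tsum_subtype_eq_sum_logWindow hε _ _ _).trans_le
      (sum_logWindow_le_exp hε (by linarith) (by linarith)),
    (hlower ⟨hε, hεε₀⟩).trans_eq (tsum_subtype_eq_sum_logWindow hε _ _ _).symm⟩

/-- Geometric-sum estimates for the number of excursions.
Let `0 ≤ b`, `V > 0`, `ζ ∈ (0,1)` with `b + ζ/2 < V`, and `0 < δ < ζ/8`. Set
`p_ε = exp(−(V+δ)/ε)`, `q_ε = exp(−(V−δ)/ε)` and
`I_ε = { j ≥ 1 : ε log j ∈ [b − ζ/4, b + ζ/4] }`. Then for all small enough `ε > 0`: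
`Σ_{j∈I_ε} q_ε (1−p_ε)^{j−1} ≤ exp((b−V+ζ/2)/ε)` and
`Σ_{j∈I_ε} p_ε (1−q_ε)^{j−1} ≥ exp((b−V−ζ/2)/ε)`. -/
theorem stmt4 (b V ζ δ : ℝ) (hb : 0 ≤ b) (hV : 0 < V)
    (hζ : ζ ∈ Set.Ioo (0:ℝ) 1) (hbV : b + ζ / 2 < V)
    (hδ0 : 0 < δ) (hδ : δ < ζ / 8) :
    ∃ ε₀ > 0, ∀ ε : ℝ, 0 < ε → ε < ε₀ →
      (∑' j : {j : ℕ // 1 ≤ j ∧ ε * Real.log (j : ℕ) ∈ Set.Icc (b - ζ / 4) (b + ζ / 4)},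
          Real.exp (-(V - δ) / ε) * (1 - Real.exp (-(V + δ) / ε)) ^ ((j : ℕ) - 1))
        ≤ Real.exp ((b - V + ζ / 2) / ε) ∧
      Real.exp ((b - V - ζ / 2) / ε) ≤
        (∑' j : {j : ℕ // 1 ≤ j ∧ ε * Real.log (j : ℕ) ∈ Set.Icc (b - ζ / 4) (b + ζ / 4)},
          Real.exp (-(V + δ) / ε) * (1 - Real.exp (-(V - δ) / ε)) ^ ((j : ℕ) - 1)) :=
  stmt4_general b V ζ δ hb hbV hδ0 hδ
end

section
/- For every η > 0, lim_{ε→0⁺} ε · log( Σ_{m=0}^{∞} exp( ε^{−1/2}(m+1) − ε · exp( ε^{−1} η/2 + ε^{−1/2} m ) ) ) = −∞. In particular, for each sufficiently small ε > 0 the series converges and the ratio of successive terms tends to 0 uniformly in m as ε → 0⁺. -/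
/-!
With `a = ε^{-1/2}` and `B = ε e^{η/(2ε)}` the `m`-th term is `exp (a (m + 1) - B e^{a m})`.
Once `B ≥ 2` the double exponential beats the linear growth: by `e^t ≥ 1 + t` each term is
at most `e^{a - B} (e^{-a})^m` and the ratio of consecutive terms is at most `e^{-a}`. Hence
the sum is at most `2 e^{a - B}` as soon as `a ≥ 1`, so
`ε log(sum) ≤ log 2 + 1 - ε² e^{η/(2ε)} → -∞`, while the ratios are bounded by
`e^{-ε^{-1/2}} → 0`.
-/

open Filter Real Topology

lemma tendsto_pow_mul_exp_inv_mul_nhdsGT_zero {c : ℝ} (hc : 0 < c) (k : ℕ) :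
    Tendsto (fun ε : ℝ => ε ^ k * exp (ε⁻¹ * c)) (𝓝[>] 0) atTop := by
  refine ((tendsto_exp_mul_div_rpow_atTop k c hc).comp tendsto_inv_nhdsGT_zero).congr' ?_
  filter_upwards [self_mem_nhdsWithin] with ε (hε : 0 < ε)
  simp only [Function.comp, rpow_natCast, inv_pow, div_inv_eq_mul, mul_comm c]
  ring

noncomputable def summand (a B x : ℝ) : ℝ := exp (a * (x + 1) - B * exp (a * x))

lemma summand_pos (a B x : ℝ) : 0 < summand a B x := exp_pos _

lemma exp_sub_mul_exp_add_eq_summand (a ε c x : ℝ) :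
    exp (a * (x + 1) - ε * exp (c + a * x)) = summand a (ε * exp c) x := by
  rw [summand, exp_add, mul_assoc]

lemma exp_sub_mul_exp_add_eq_summand_succ (a ε c x : ℝ) :
    exp (a * (x + 2) - ε * exp (c + a * (x + 1))) = summand a (ε * exp c) (x + 1) := by
  rw [← exp_sub_mul_exp_add_eq_summand, add_assoc, one_add_one_eq_two]

section summand

variable {a B : ℝ}

lemma summand_le_geometric (ha : 0 ≤ a) (hB : 2 ≤ B) (m : ℕ) :
    summand a B m ≤ exp (a - B) * exp (-a) ^ m := by
  rw [summand, ← exp_nat_mul, ← exp_add, exp_le_exp]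
  have ham : 0 ≤ a * m := by positivity
  have h1 : a * m + 1 ≤ exp (a * m) := add_one_le_exp _
  nlinarith

lemma summable_summand (ha : 0 < a) (hB : 2 ≤ B) : Summable fun m : ℕ => summand a B m :=
  have hr : exp (-a) < 1 := exp_lt_one_iff.2 (neg_lt_zero.2 ha)
  ((summable_geometric_of_lt_one (exp_nonneg _) hr).mul_left _).of_nonneg_of_le
    (fun m => (summand_pos a B m).le) (summand_le_geometric ha.le hB)

lemma tsum_summand_pos (ha : 0 < a) (hB : 2 ≤ B) : 0 < ∑' m : ℕ, summand a B m :=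
  (summable_summand ha hB).tsum_pos (fun m => (summand_pos a B m).le) 0 (summand_pos a B _)

lemma tsum_summand_le (ha : 1 ≤ a) (hB : 2 ≤ B) :
    ∑' m : ℕ, summand a B m ≤ 2 * exp (a - B) := by
  have ha0 : 0 < a := one_pos.trans_le ha
  have hr : exp (-a) ≤ 1 / 2 := by
    have := add_one_le_exp a
    rw [exp_neg, inv_le_comm₀ (exp_pos a) (by norm_num)]
    linarith
  have hr1 : exp (-a) < 1 := by linarith
  calc ∑' m : ℕ, summand a B m ≤ ∑' m : ℕ, exp (a - B) * exp (-a) ^ m :=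
        (summable_summand ha0 hB).tsum_le_tsum (summand_le_geometric ha0.le hB)
          ((summable_geometric_of_lt_one (exp_nonneg _) hr1).mul_left _)
    _ = exp (a - B) * (1 - exp (-a))⁻¹ := by
        rw [tsum_mul_left, tsum_geometric_of_lt_one (exp_nonneg _) hr1]
    _ ≤ exp (a - B) * 2 := by
        gcongr
        rw [inv_le_comm₀ (by linarith) (by norm_num)]
        linarith
    _ = 2 * exp (a - B) := mul_comm _ _

lemma log_tsum_summand_le (ha : 1 ≤ a) (hB : 2 ≤ B) :
    log (∑' m : ℕ, summand a B m) ≤ log 2 + (a - B) := by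
  calc log (∑' m : ℕ, summand a B m) ≤ log (2 * exp (a - B)) :=
        log_le_log (tsum_summand_pos (one_pos.trans_le ha) hB) (tsum_summand_le ha hB)
    _ = log 2 + (a - B) := by rw [log_mul two_ne_zero (exp_ne_zero _), log_exp]

lemma summand_succ_div_le (ha : 0 ≤ a) (hB : 2 ≤ B) {x : ℝ} (hx : 0 ≤ x) :
    summand a B (x + 1) / summand a B x ≤ exp (-a) := by
  rw [summand, summand, ← exp_sub, exp_le_exp, mul_add a x 1, exp_add, mul_one]
  have h1 : a + 1 ≤ exp a := add_one_le_exp a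
  have h2 : 2 ≤ B * exp (a * x) := by
    nlinarith [one_le_exp (show 0 ≤ a * x by positivity)]
  nlinarith

end summand

lemma mul_rpow_neg_half_le_one {ε : ℝ} (hε : 0 < ε) (hε1 : ε ≤ 1) :
    ε * ε ^ (-(1:ℝ)/2) ≤ 1 := by
  rw [← rpow_one_add' hε.le (by norm_num)]
  exact rpow_le_one hε.le hε1 (by norm_num)

lemma mul_log_tsum_summand_le {ε B : ℝ} (hε : 0 < ε) (hε1 : ε ≤ 1) (hB : 2 ≤ B) :
    ε * log (∑' m : ℕ, summand (ε ^ (-(1:ℝ)/2)) B m) ≤ log 2 + 1 - ε * B := by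
  have ha : 1 ≤ ε ^ (-(1:ℝ)/2) := one_le_rpow_of_pos_of_le_one_of_nonpos hε hε1 (by norm_num)
  calc ε * log (∑' m : ℕ, summand (ε ^ (-(1:ℝ)/2)) B m)
      ≤ ε * (log 2 + (ε ^ (-(1:ℝ)/2) - B)) :=
        mul_le_mul_of_nonneg_left (log_tsum_summand_le ha hB) hε.le
    _ = ε * log 2 + ε * ε ^ (-(1:ℝ)/2) - ε * B := by ring
    _ ≤ log 2 + 1 - ε * B := by
        gcongr
        · exact mul_le_of_le_one_left (log_nonneg one_le_two) hε1
        · exact mul_rpow_neg_half_le_one hε hε1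

/-- The summation in eq. (4.24) is negligible.
For every `η > 0`,
`ε log ( Σ_{m≥0} exp( ε^{-1/2}(m+1) − ε exp(ε⁻¹ η/2 + ε^{-1/2} m) ) ) → −∞` as `ε → 0⁺`;
moreover for all sufficiently small `ε > 0` the series is summable, and the supremum over `m`
of the ratio of successive terms tends to `0` as `ε → 0⁺`. -/
theorem stmt5 (η : ℝ) (hη : 0 < η) :
    Tendsto (fun ε : ℝ => ε * Real.log (∑' m : ℕ,
        Real.exp (ε ^ (-(1:ℝ)/2) * (m + 1)
          - ε * Real.exp (ε⁻¹ * η / 2 + ε ^ (-(1:ℝ)/2) * m))))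
      (nhdsWithin 0 (Set.Ioi 0)) atBot ∧
    (∀ᶠ ε : ℝ in nhdsWithin 0 (Set.Ioi 0), Summable (fun m : ℕ =>
        Real.exp (ε ^ (-(1:ℝ)/2) * (m + 1)
          - ε * Real.exp (ε⁻¹ * η / 2 + ε ^ (-(1:ℝ)/2) * m)))) ∧
    Tendsto (fun ε : ℝ => ⨆ m : ℕ,
        Real.exp (ε ^ (-(1:ℝ)/2) * (m + 2)
            - ε * Real.exp (ε⁻¹ * η / 2 + ε ^ (-(1:ℝ)/2) * (m + 1))) /
          Real.exp (ε ^ (-(1:ℝ)/2) * (m + 1)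
            - ε * Real.exp (ε⁻¹ * η / 2 + ε ^ (-(1:ℝ)/2) * m)))
      (nhdsWithin 0 (Set.Ioi 0)) (nhds 0) := by
  simp only [exp_sub_mul_exp_add_eq_summand, exp_sub_mul_exp_add_eq_summand_succ]
  have hB := tendsto_pow_mul_exp_inv_mul_nhdsGT_zero (half_pos hη)
  simp only [← mul_div_assoc] at hB
  have hsmall : ∀ᶠ ε : ℝ in 𝓝[>] 0,
      0 < ε ∧ ε ≤ 1 ∧ 1 ≤ ε ^ (-(1:ℝ)/2) ∧ 2 ≤ ε * exp (ε⁻¹ * η / 2) := by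
    filter_upwards [self_mem_nhdsWithin, Ioc_mem_nhdsGT one_pos, (hB 1).eventually_ge_atTop 2]
      with ε hε hε1 hεB
    rw [pow_one] at hεB
    exact ⟨hε, hε1.2, one_le_rpow_of_pos_of_le_one_of_nonpos hε hε1.2 (by norm_num), hεB⟩
  have hεB : Tendsto (fun ε : ℝ => ε * (ε * exp (ε⁻¹ * η / 2))) (𝓝[>] 0) atTop := by
    simpa only [sq, mul_assoc] using hB 2
  refine ⟨?_, ?_, ?_⟩
  · refine tendsto_atBot_mono' _ ?_
      (tendsto_atBot_add_const_left _ (log 2 + 1) (tendsto_neg_atTop_atBot.comp hεB))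
    filter_upwards [hsmall] with ε h
    obtain ⟨hε, hε1, -, hB2⟩ := h
    exact mul_log_tsum_summand_le hε hε1 hB2
  · filter_upwards [hsmall] with ε h
    exact summable_summand (one_pos.trans_le h.2.2.1) h.2.2.2
  · refine tendsto_of_tendsto_of_tendsto_of_le_of_le' tendsto_const_nhds
      (tendsto_exp_atBot.comp (tendsto_neg_atTop_atBot.comp
        (tendsto_rpow_neg_nhdsGT_zero (y := -(1:ℝ)/2) (by norm_num)))) ?_ ?_
    · exact Eventually.of_forall fun ε =>
        iSup_nonneg fun m => div_nonneg (summand_pos _ _ _).le (summand_pos _ _ _).le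
    · filter_upwards [hsmall] with ε h
      exact ciSup_le fun m =>
        summand_succ_div_le (zero_le_one.trans h.2.2.1) h.2.2.2 m.cast_nonneg
end

section
/- Let 0 < b < c be real constants. Then lim_{ε→0⁺} ε · log( Σ_{k ≥ ⌈exp(c/ε)⌉} exp( −k · exp(−b/ε) ) ) = −∞, where the sum is over all integers k with k ≥ ⌈exp(c/ε)⌉. -/
/-!
With `r = exp (-b/ε)` and `N = ⌈exp (c/ε)⌉₊`, the sum is the geometric tail
`exp (-r) ^ N / (1 - exp (-r))`. Since `1 - exp (-r) ≥ r exp (-r)`, its logarithm is at most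
`-(N - 1) r - log r ≤ -exp ((c - b)/ε) + 1 + b/ε`, and `ε exp ((c - b)/ε) → ∞` as `ε → 0⁺`.
-/

open Filter Topology Real

theorem tsum_subtype_le_eq_tsum_add {α : Type*} [AddCommMonoid α] [TopologicalSpace α]
    (f : ℕ → α) (N : ℕ) : ∑' k : {k : ℕ // N ≤ k}, f k = ∑' j : ℕ, f (j + N) :=
  let e : ℕ ≃ {k : ℕ // N ≤ k} :=
    (notMemRangeEquiv N).symm.trans (Equiv.subtypeEquivRight fun k => by simp)
  (e.tsum_eq fun k => f k).symm

theorem tsum_subtype_le_geometric {q : ℝ} (hq₀ : 0 ≤ q) (hq₁ : q < 1) (N : ℕ) :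
    ∑' k : {k : ℕ // N ≤ k}, q ^ (k : ℕ) = q ^ N / (1 - q) := by
  simp only [tsum_subtype_le_eq_tsum_add (q ^ ·), pow_add, tsum_mul_right,
    tsum_geometric_of_lt_one hq₀ hq₁]
  ring

theorem mul_exp_neg_le_one_sub_exp_neg (r : ℝ) : r * exp (-r) ≤ 1 - exp (-r) := by
  have := add_one_le_exp r
  have : exp r * exp (-r) = 1 := by rw [← exp_add, add_neg_cancel, exp_zero]
  nlinarith [exp_pos (-r)]

theorem log_tsum_exp_neg_mul_le {r : ℝ} (hr : 0 < r) (N : ℕ) :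
    log (∑' k : {k : ℕ // N ≤ k}, exp (-((k : ℕ) : ℝ) * r)) ≤ -(N * r) + r - log r := by
  have hq₁ : exp (-r) < 1 := exp_lt_one_iff.mpr (neg_neg_of_pos hr)
  have hgeom := tsum_subtype_le_geometric (exp_pos (-r)).le hq₁ N
  simp only [← exp_nat_mul, mul_neg] at hgeom
  simp only [neg_mul, hgeom]
  have hpos : 0 < 1 - exp (-r) := sub_pos.mpr hq₁
  have hlog : log (r * exp (-r)) ≤ log (1 - exp (-r)) :=
    log_le_log (by positivity) (mul_exp_neg_le_one_sub_exp_neg r)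
  rw [log_mul hr.ne' (exp_pos _).ne', log_exp] at hlog
  rw [log_div (exp_pos _).ne' hpos.ne', log_exp]
  linarith

theorem tendsto_mul_exp_div_nhdsGT_zero {a : ℝ} (ha : 0 < a) :
    Tendsto (fun ε : ℝ => ε * exp (a / ε)) (𝓝[>] 0) atTop := by
  refine ((tendsto_exp_mul_div_rpow_atTop 1 a ha).comp tendsto_inv_nhdsGT_zero).congr' ?_
  filter_upwards [self_mem_nhdsWithin] with ε (hε : 0 < ε)
  simp [div_eq_mul_inv, mul_comm]

/-- Tail of the geometric-type sum is super-exponentially small.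
For `0 < b < c`, `ε log ( Σ_{k ≥ ⌈exp(c/ε)⌉} exp(−k e^{−b/ε}) ) → −∞` as `ε → 0⁺`. -/
theorem stmt6 (b c : ℝ) (hb : 0 < b) (hbc : b < c) :
    Tendsto (fun ε : ℝ => ε * Real.log
        (∑' k : {k : ℕ // ⌈Real.exp (c / ε)⌉₊ ≤ k},
          Real.exp (-((k : ℕ) : ℝ) * Real.exp (-b / ε))))
      (nhdsWithin 0 (Set.Ioi 0)) atBot := by
  have hbound : Tendsto (fun ε : ℝ => -(ε * exp ((c - b) / ε)) + (ε + b)) (𝓝[>] 0) atBot :=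
    (tendsto_neg_atBot_iff.mpr (tendsto_mul_exp_div_nhdsGT_zero (sub_pos.mpr hbc))).atBot_add
      (((continuous_id.add continuous_const).tendsto' 0 b (zero_add b)).mono_left
        nhdsWithin_le_nhds)
  refine tendsto_atBot_mono' _ ?_ hbound
  filter_upwards [self_mem_nhdsWithin] with ε (hε : 0 < ε)
  have hr_le_one : exp (-b / ε) ≤ 1 :=
    exp_le_one_iff.mpr (div_nonpos_of_nonpos_of_nonneg (neg_nonpos.mpr hb.le) hε.le)
  have hNr : exp ((c - b) / ε) ≤ ⌈exp (c / ε)⌉₊ * exp (-b / ε) := by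
    rw [sub_div, sub_eq_add_neg, exp_add, ← neg_div]
    exact mul_le_mul_of_nonneg_right (Nat.le_ceil _) (exp_pos _).le
  have hlog := log_tsum_exp_neg_mul_le (exp_pos (-b / ε)) ⌈exp (c / ε)⌉₊
  rw [log_exp] at hlog
  calc _ ≤ ε * (-exp ((c - b) / ε) + 1 + b / ε) := by gcongr; linarith [neg_div ε b]
    _ = -(ε * exp ((c - b) / ε)) + (ε + b) := by field_simp; ring
end

section
/- Fix T > 0. The curves t ↦ φ_{t|T} and t ↦ p_{t|T} are differentiable on [0,T] and satisfy the Hamiltonian system (d/dt) φ_{t|T} = A φ_{t|T} + 2 p_{t|T} and (d/dt) p_{t|T} = −Aᵀ p_{t|T} for all t ∈ [0,T], together with the boundary conditions φ_{0|T} = 0 and φ_{T|T} = L. -/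
/-!
With `J` the quarter turn, `J² = -1`, `R_θ = cos θ + sin θ • J`, `A = -μ + ω • J` and
`Aᵀ = -μ - ω • J`. So `v t = R_{t-T} L` solves `v' = ω • J v`, whose rotational part matches
that of `A` and `-Aᵀ`, and `φ = a • v`, `p = b • v` solve the Hamiltonian system because the
scalar factors satisfy `a' = -μ a + 2 b` and `b' = μ b`.
-/

open scoped Matrix
open Real

noncomputable def quarterTurn : EuclideanSpace ℝ (Fin 2) →ₗ[ℝ] EuclideanSpace ℝ (Fin 2) :=
  Matrix.toEuclideanLin !![0, -1; 1, 0]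

theorem quarterTurn_quarterTurn (w : EuclideanSpace ℝ (Fin 2)) :
    quarterTurn (quarterTurn w) = -w := by
  ext i
  fin_cases i <;> simp [quarterTurn, Matrix.toLpLin_apply, dotProduct, Fin.sum_univ_two]

theorem toEuclideanLin_eq_smul_add_smul_quarterTurn (a b : ℝ) (w : EuclideanSpace ℝ (Fin 2)) :
    Matrix.toEuclideanLin !![a, -b; b, a] w = a • w + b • quarterTurn w := by
  ext i
  fin_cases i <;> simp [quarterTurn, Matrix.toLpLin_apply, dotProduct, Fin.sum_univ_two]; ring

theorem hasDerivAt_cos_smul_add_sin_smul_quarterTurn (w : EuclideanSpace ℝ (Fin 2))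
    {θ : ℝ → ℝ} {θ' t : ℝ} (hθ : HasDerivAt θ θ' t) :
    HasDerivAt (fun s => cos (θ s) • w + sin (θ s) • quarterTurn w)
      (θ' • quarterTurn (cos (θ t) • w + sin (θ t) • quarterTurn w)) t := by
  refine ((hθ.cos.smul_const w).add (hθ.sin.smul_const (quarterTurn w))).congr_deriv ?_
  simp only [map_add, map_smul, quarterTurn_quarterTurn]
  module

theorem hasDerivAt_exp_mul (μ t : ℝ) :
    HasDerivAt (fun s => exp (μ * s)) (μ * exp (μ * t)) t := by
  simpa [mul_comm] using ((hasDerivAt_id t).const_mul μ).exp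

theorem hasDerivAt_exp_mul_sub_exp_neg_mul (μ t : ℝ) :
    HasDerivAt (fun s => exp (μ * s) - exp (-(μ * s))) (μ * (exp (μ * t) + exp (-(μ * t)))) t := by
  have h := (hasDerivAt_exp_mul μ t).sub (by simpa using hasDerivAt_exp_mul (-μ) t)
  exact h.congr_deriv (by ring)

theorem stmt11_general (μ ω T : ℝ) (hμ : 0 < μ) (hT : 0 < T)
    (L : EuclideanSpace ℝ (Fin 2))
    (A : Matrix (Fin 2) (Fin 2) ℝ) (hA : A = !![-μ, -ω; ω, -μ])
    (R : ℝ → Matrix (Fin 2) (Fin 2) ℝ)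
    (hR : ∀ t, R t = !![Real.cos (ω * t), -Real.sin (ω * t);
                        Real.sin (ω * t), Real.cos (ω * t)])
    (φ p : ℝ → EuclideanSpace ℝ (Fin 2))
    (hφ : ∀ t, φ t = ((Real.exp (μ * t) - Real.exp (-(μ * t))) /
        (Real.exp (μ * T) - Real.exp (-(μ * T)))) • Matrix.toEuclideanLin (R (t - T)) L)
    (hp : ∀ t, p t = (μ * Real.exp (μ * t) /
        (Real.exp (μ * T) - Real.exp (-(μ * T)))) • Matrix.toEuclideanLin (R (t - T)) L) :
    (∀ t ∈ Set.Icc (0:ℝ) T,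
        HasDerivAt φ (Matrix.toEuclideanLin A (φ t) + (2:ℝ) • p t) t ∧
        HasDerivAt p (-(Matrix.toEuclideanLin Aᵀ (p t))) t) ∧
    φ 0 = 0 ∧ φ T = L := by
  set v : ℝ → EuclideanSpace ℝ (Fin 2) := fun s =>
    cos (ω * (s - T)) • L + sin (ω * (s - T)) • quarterTurn L with hv
  have hRv : ∀ s, Matrix.toEuclideanLin (R (s - T)) L = v s := fun s => by
    rw [hR, toEuclideanLin_eq_smul_add_smul_quarterTurn]
  have hA' : ∀ w, Matrix.toEuclideanLin A w = -μ • w + ω • quarterTurn w := fun w => by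
    rw [hA, toEuclideanLin_eq_smul_add_smul_quarterTurn]
  have hAT : ∀ w, Matrix.toEuclideanLin Aᵀ w = -μ • w + -ω • quarterTurn w := fun w => by
    rw [hA, ← toEuclideanLin_eq_smul_add_smul_quarterTurn, neg_neg]
    congr 2
    ext i j; fin_cases i <;> fin_cases j <;> rfl
  have hv' : ∀ t, HasDerivAt v (ω • quarterTurn (v t)) t := fun t =>
    hasDerivAt_cos_smul_add_sin_smul_quarterTurn L
      (by simpa using ((hasDerivAt_id t).sub_const T).const_mul ω)
  simp only [hRv] at hφ hp
  refine ⟨fun t _ => ⟨?_, ?_⟩, ?_, ?_⟩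
  · rw [hφ t, hp t, funext hφ, hA']
    refine (((hasDerivAt_exp_mul_sub_exp_neg_mul μ t).div_const _).smul (hv' t)).congr_deriv ?_
    simp only [map_smul]
    module
  · rw [hp t, funext hp, hAT]
    refine ((((hasDerivAt_exp_mul μ t).const_mul μ).div_const _).smul (hv' t)).congr_deriv ?_
    simp only [map_smul]
    module
  · simp [hφ]
  · have hD : exp (μ * T) - exp (-(μ * T)) ≠ 0 :=
      sub_ne_zero.2 (exp_injective.ne (by nlinarith))
    simp [hφ, hv, hD]

/-- The explicit suboptimal MLT solves the Hamiltonian system.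
For the 2D OU process with matrix `A = !![-μ, -ω; ω, -μ]` and rotation matrices `R_t`, the
curves `φ_{t|T} = ((e^{μt} − e^{−μt})/(e^{μT} − e^{−μT})) R_{t−T} L` and
`p_{t|T} = (μ e^{μt}/(e^{μT} − e^{−μT})) R_{t−T} L` satisfy, on `[0,T]`,
`φ' = Aφ + 2p`, `p' = −Aᵀ p`, with `φ_{0|T} = 0` and `φ_{T|T} = L`. -/
theorem stmt11 (μ ω T : ℝ) (hμ : 0 < μ) (hT : 0 < T)
    (L : EuclideanSpace ℝ (Fin 2)) (hL : L ≠ 0)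
    (A : Matrix (Fin 2) (Fin 2) ℝ) (hA : A = !![-μ, -ω; ω, -μ])
    (R : ℝ → Matrix (Fin 2) (Fin 2) ℝ)
    (hR : ∀ t, R t = !![Real.cos (ω * t), -Real.sin (ω * t);
                        Real.sin (ω * t), Real.cos (ω * t)])
    (φ p : ℝ → EuclideanSpace ℝ (Fin 2))
    (hφ : ∀ t, φ t = ((Real.exp (μ * t) - Real.exp (-(μ * t))) /
        (Real.exp (μ * T) - Real.exp (-(μ * T)))) • Matrix.toEuclideanLin (R (t - T)) L)
    (hp : ∀ t, p t = (μ * Real.exp (μ * t) /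
        (Real.exp (μ * T) - Real.exp (-(μ * T)))) • Matrix.toEuclideanLin (R (t - T)) L) :
    (∀ t ∈ Set.Icc (0:ℝ) T,
        HasDerivAt φ (Matrix.toEuclideanLin A (φ t) + (2:ℝ) • p t) t ∧
        HasDerivAt p (-(Matrix.toEuclideanLin Aᵀ (p t))) t) ∧
    φ 0 = 0 ∧ φ T = L :=
  stmt11_general μ ω T hμ hT L A hA R hR φ p hφ hp
end

section
/- Fix T > 0 and define S_{t|T} = (μ ‖L‖²/2) · ( e^{−2μT}/(1 − e^{−2μT})² ) · ( e^{2μt} − 1 ) for t ∈ [0,T], and V(x,t) = (μ/2) ‖x‖² / (1 − e^{−2μt}) for x ∈ ℝ², t > 0. Then: (i) S_{0|T} = 0; (ii) (d/dt) S_{t|T} = ‖p_{t|T}‖² for all t ∈ [0,T]; and (iii) S_{t|T} = V(φ_{t|T}, t) for all t ∈ (0,T]. -/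
/-!
Rotations preserve the Euclidean norm, so all three claims reduce to scalar identities between
exponentials, which follow from the factorisations `1 - e^{-2x} = e^{-x} (e^x - e^{-x})` and
`e^{2x} - 1 = e^x (e^x - e^{-x})`.
-/

open Real

lemma norm_toEuclideanLin_rotation (θ : ℝ) (v : EuclideanSpace ℝ (Fin 2)) :
    ‖Matrix.toEuclideanLin !![cos θ, -sin θ; sin θ, cos θ] v‖ = ‖v‖ := by
  simp only [EuclideanSpace.norm_eq, Fin.sum_univ_two, Real.norm_eq_abs, sq_abs]
  congr 1
  simp [Matrix.toLpLin_apply, dotProduct, Fin.sum_univ_two]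
  linear_combination (v 0 ^ 2 + v 1 ^ 2) * cos_sq_add_sin_sq θ

lemma one_sub_exp_neg_two_mul (x : ℝ) : 1 - exp (-(2 * x)) = exp (-x) * (exp x - exp (-x)) := by
  rw [mul_sub, ← exp_add, ← exp_add, neg_add_cancel, exp_zero, ← two_mul, mul_neg]

lemma exp_two_mul_sub_one (x : ℝ) : exp (2 * x) - 1 = exp x * (exp x - exp (-x)) := by
  rw [mul_sub, ← exp_add, ← exp_add, add_neg_cancel, exp_zero, ← two_mul]

lemma exp_neg_two_mul_div_one_sub_exp_neg_two_mul_sq (x : ℝ) :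
    exp (-(2 * x)) / (1 - exp (-(2 * x))) ^ 2 = 1 / (exp x - exp (-x)) ^ 2 := by
  rw [one_sub_exp_neg_two_mul, mul_pow, ← exp_nat_mul, Nat.cast_ofNat, mul_neg,
    div_mul_cancel_left₀ (exp_pos _).ne', one_div]

lemma sq_exp_sub_exp_neg_div_one_sub_exp_neg_two_mul (x : ℝ) :
    (exp x - exp (-x)) ^ 2 / (1 - exp (-(2 * x))) = exp (2 * x) - 1 := by
  rw [one_sub_exp_neg_two_mul, exp_two_mul_sub_one]
  rcases eq_or_ne (exp x - exp (-x)) 0 with h | h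
  · simp [h]
  · rw [exp_neg]
    field_simp

theorem stmt12_general (μ ω T : ℝ)
    (L : EuclideanSpace ℝ (Fin 2))
    (R : ℝ → Matrix (Fin 2) (Fin 2) ℝ)
    (hR : ∀ t, R t = !![Real.cos (ω * t), -Real.sin (ω * t);
                        Real.sin (ω * t), Real.cos (ω * t)])
    (φ p : ℝ → EuclideanSpace ℝ (Fin 2))
    (hφ : ∀ t, φ t = ((Real.exp (μ * t) - Real.exp (-(μ * t))) /
        (Real.exp (μ * T) - Real.exp (-(μ * T)))) • Matrix.toEuclideanLin (R (t - T)) L)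
    (hp : ∀ t, p t = (μ * Real.exp (μ * t) /
        (Real.exp (μ * T) - Real.exp (-(μ * T)))) • Matrix.toEuclideanLin (R (t - T)) L)
    (S : ℝ → ℝ)
    (hS : ∀ t, S t = μ * ‖L‖ ^ 2 / 2 *
        (Real.exp (-(2 * μ * T)) / (1 - Real.exp (-(2 * μ * T))) ^ 2) *
        (Real.exp (2 * μ * t) - 1))
    (V : EuclideanSpace ℝ (Fin 2) → ℝ → ℝ)
    (hV : ∀ x t, V x t = μ / 2 * ‖x‖ ^ 2 / (1 - Real.exp (-(2 * μ * t)))) :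
    S 0 = 0 ∧
    (∀ t ∈ Set.Icc (0:ℝ) T, HasDerivAt S (‖p t‖ ^ 2) t) ∧
    (∀ t ∈ Set.Ioc (0:ℝ) T, S t = V (φ t) t) := by
  have hRL (s : ℝ) : ‖Matrix.toEuclideanLin (R s) L‖ = ‖L‖ := by
    rw [hR]
    exact norm_toEuclideanLin_rotation _ L
  have hcoef : exp (-(2 * μ * T)) / (1 - exp (-(2 * μ * T))) ^ 2
      = 1 / (exp (μ * T) - exp (-(μ * T))) ^ 2 := by
    rw [mul_assoc]
    exact exp_neg_two_mul_div_one_sub_exp_neg_two_mul_sq _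
  refine ⟨by simp [hS], fun t _ => ?_, fun t _ => ?_⟩
  · set C := μ * ‖L‖ ^ 2 / 2 * (1 / (exp (μ * T) - exp (-(μ * T))) ^ 2)
    have hd := (((hasDerivAt_id' t).const_mul (2 * μ)).exp.sub_const 1).const_mul C
    rw [show S = fun s => C * (exp (2 * μ * s) - 1) from funext fun s => by rw [hS, hcoef]]
    refine hd.congr_deriv ?_
    rw [hp, norm_smul, hRL, Real.norm_eq_abs, mul_pow, sq_abs, div_pow,
      show exp (2 * μ * t) = exp (μ * t) ^ 2 by rw [sq, ← exp_add]; ring_nf]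
    ring
  · rw [hS, hV, hφ, norm_smul, hRL, Real.norm_eq_abs, mul_pow, sq_abs, hcoef, mul_assoc 2 μ t,
      ← sq_exp_sub_exp_neg_div_one_sub_exp_neg_two_mul, div_pow]
    ring

/-- The cost along the suboptimal MLT.
With `S_{t|T} = (μ‖L‖²/2)(e^{−2μT}/(1 − e^{−2μT})²)(e^{2μt} − 1)` and
`V(x,t) = (μ/2)‖x‖²/(1 − e^{−2μt})`: (i) `S_{0|T} = 0`; (ii) `S' = ‖p_{t|T}‖²` on `[0,T]`;
(iii) `S_{t|T} = V(φ_{t|T}, t)` on `(0,T]`. -/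
theorem stmt12 (μ ω T : ℝ) (hμ : 0 < μ) (hT : 0 < T)
    (L : EuclideanSpace ℝ (Fin 2)) (hL : L ≠ 0)
    (R : ℝ → Matrix (Fin 2) (Fin 2) ℝ)
    (hR : ∀ t, R t = !![Real.cos (ω * t), -Real.sin (ω * t);
                        Real.sin (ω * t), Real.cos (ω * t)])
    (φ p : ℝ → EuclideanSpace ℝ (Fin 2))
    (hφ : ∀ t, φ t = ((Real.exp (μ * t) - Real.exp (-(μ * t))) /
        (Real.exp (μ * T) - Real.exp (-(μ * T)))) • Matrix.toEuclideanLin (R (t - T)) L)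
    (hp : ∀ t, p t = (μ * Real.exp (μ * t) /
        (Real.exp (μ * T) - Real.exp (-(μ * T)))) • Matrix.toEuclideanLin (R (t - T)) L)
    (S : ℝ → ℝ)
    (hS : ∀ t, S t = μ * ‖L‖ ^ 2 / 2 *
        (Real.exp (-(2 * μ * T)) / (1 - Real.exp (-(2 * μ * T))) ^ 2) *
        (Real.exp (2 * μ * t) - 1))
    (V : EuclideanSpace ℝ (Fin 2) → ℝ → ℝ)
    (hV : ∀ x t, V x t = μ / 2 * ‖x‖ ^ 2 / (1 - Real.exp (-(2 * μ * t)))) :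
    S 0 = 0 ∧
    (∀ t ∈ Set.Icc (0:ℝ) T, HasDerivAt S (‖p t‖ ^ 2) t) ∧
    (∀ t ∈ Set.Ioc (0:ℝ) T, S t = V (φ t) t) :=
  stmt12_general μ ω T L R hR φ p hφ hp S hS V hV
end

section
/- Define V(x,t) = (μ/2) ‖x‖² / (1 − e^{−2μt}) for x ∈ ℝ² and t > 0. Then V satisfies the Hamilton–Jacobi equation associated with the Hamiltonian H(x,p) = ⟨p, A x⟩ + ‖p‖²: for all x ∈ ℝ² and t > 0, ∂_t V(x,t) + ⟨∇_x V(x,t), A x⟩ + ‖∇_x V(x,t)‖² = 0. -/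
/-!
Write `d = 1 - e^{-2μt}`. The gradient of `V` in `x` is `(μ / d) x`, and the rotation part of `A`
drops out of `⟨x, A x⟩ = -μ ‖x‖²`. Hence the three terms of the equation are `μ² ‖x‖²` times
`-e^{-2μt} / d²`, `-1 / d` and `1 / d²`, which sum to `(1 - e^{-2μt} - d) / d² = 0`.
-/

open scoped RealInnerProductSpace

theorem hasGradientAt_const_mul_norm_sq {F : Type*} [NormedAddCommGroup F] [InnerProductSpace ℝ F]
    [CompleteSpace F] (c : ℝ) (x : F) :
    HasGradientAt (fun y => c * ‖y‖ ^ 2) ((2 * c) • x) x := by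
  rw [hasGradientAt_iff_hasFDerivAt]
  refine ((hasStrictFDerivAt_norm_sq x).hasFDerivAt.const_mul c).congr_fderiv ?_
  ext y
  simp [InnerProductSpace.toDual_apply_apply]
  ring

theorem inner_self_toEuclideanLin_scaledRotation (a b : ℝ) (x : EuclideanSpace ℝ (Fin 2)) :
    ⟪x, Matrix.toEuclideanLin !![a, -b; b, a] x⟫ = a * ‖x‖ ^ 2 := by
  simp [EuclideanSpace.norm_sq_eq, PiLp.inner_apply, Fin.sum_univ_two, Matrix.mulVec, dotProduct]
  ring

theorem one_sub_exp_neg_ne_zero {x : ℝ} (hx : x ≠ 0) : 1 - Real.exp (-x) ≠ 0 := by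
  rw [sub_ne_zero, ne_comm, Ne, Real.exp_eq_one_iff, neg_eq_zero]
  exact hx

theorem hasDerivAt_div_one_sub_exp_neg_mul (c k t : ℝ) (hkt : k * t ≠ 0) :
    HasDerivAt (fun s => c / (1 - Real.exp (-(k * s))))
      (-(c * k * Real.exp (-(k * t))) / (1 - Real.exp (-(k * t))) ^ 2) t := by
  have hden : HasDerivAt (fun s => 1 - Real.exp (-(k * s))) (k * Real.exp (-(k * t))) t :=
    (((hasDerivAt_id' t).const_mul k).fun_neg.exp.const_sub 1).congr_deriv (by ring)
  exact ((hasDerivAt_const t c).div hden (one_sub_exp_neg_ne_zero hkt)).congr_deriv (by ring)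

/-- The OU cost function solves the Hamilton–Jacobi equation.
`V(x,t) = (μ/2)‖x‖²/(1 − e^{−2μt})` satisfies
`∂_t V(x,t) + ⟨∇_x V(x,t), A x⟩ + ‖∇_x V(x,t)‖² = 0` for all `x ∈ ℝ²`, `t > 0`. -/
theorem stmt14 (μ ω : ℝ) (hμ : 0 < μ)
    (A : Matrix (Fin 2) (Fin 2) ℝ) (hA : A = !![-μ, -ω; ω, -μ])
    (V : EuclideanSpace ℝ (Fin 2) → ℝ → ℝ)
    (hV : ∀ x t, V x t = μ / 2 * ‖x‖ ^ 2 / (1 - Real.exp (-(2 * μ * t)))) :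
    ∀ (x : EuclideanSpace ℝ (Fin 2)), ∀ t : ℝ, 0 < t →
      deriv (fun s => V x s) t
        + ⟪gradient (fun y => V y t) x, Matrix.toEuclideanLin A x⟫
        + ‖gradient (fun y => V y t) x‖ ^ 2 = 0 := by
  intro x t ht
  have hkt : 2 * μ * t ≠ 0 := by positivity
  have hd := one_sub_exp_neg_ne_zero hkt
  have hV_time : (fun s => V x s) = fun s => μ / 2 * ‖x‖ ^ 2 / (1 - Real.exp (-(2 * μ * s))) :=
    funext (hV x)
  have hV_space : (fun y => V y t) = fun y => μ / 2 / (1 - Real.exp (-(2 * μ * t))) * ‖y‖ ^ 2 :=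
    funext fun y => by rw [hV]; ring
  rw [hV_time, (hasDerivAt_div_one_sub_exp_neg_mul _ _ _ hkt).deriv, hV_space,
    (hasGradientAt_const_mul_norm_sq _ x).gradient, hA, real_inner_smul_left,
    inner_self_toEuclideanLin_scaledRotation, norm_smul, Real.norm_eq_abs, mul_pow, sq_abs]
  field_simp
  ring
end

section
/- For s, r > 0 define the 2×2 matrix U_{sr} = (2/μ)( e^{−μ|s−r|} − e^{−μ(s+r)} ) R_{s−r}. Then for all 0 < s ≤ t, the matrix U_{tt} = (2/μ)(1 − e^{−2μt}) I is invertible, and U_{st} U_{tt}^{−1} L = ((e^{μs} − e^{−μs})/(e^{μt} − e^{−μt})) R_{s−t} L; that is, the Gaussian conditional-mean matrix formula reproduces the maximum likelihood trajectory φ_{s|t}. -/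
/-!
Every matrix `U s r` is a scalar multiple of the rotation `R (s - r)`, and `R 0 = 1`, so `U t t`
is the nonzero scalar `(2/μ)(1 - e^{-2μt})` and `U s t (U t t)⁻¹` is the scalar ratio
`(e^{-μ(t-s)} - e^{-μ(s+t)}) / (1 - e^{-2μt})` times `R (s - t)`. Multiplying numerator and
denominator by `e^{μt}` turns this ratio into `(e^{μs} - e^{-μs}) / (e^{μt} - e^{-μt})`.
-/

open Real

lemma exp_neg_sub_sub_exp_neg_add (a b : ℝ) :
    exp (-(b - a)) - exp (-(a + b)) = exp (-b) * (exp a - exp (-a)) := by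
  rw [mul_sub, ← exp_add, ← exp_add]
  ring_nf

lemma exp_neg_abs_sub_sub_exp_neg_add_div {μ s t : ℝ} (hst : s ≤ t) :
    (exp (-(μ * |s - t|)) - exp (-(μ * (s + t)))) / (1 - exp (-(2 * μ * t))) =
      (exp (μ * s) - exp (-(μ * s))) / (exp (μ * t) - exp (-(μ * t))) := calc
  _ = (exp (-(μ * t - μ * s)) - exp (-(μ * s + μ * t))) /
        (exp (-(μ * t - μ * t)) - exp (-(μ * t + μ * t))) := by
    rw [abs_of_nonpos (sub_nonpos.2 hst), sub_self, neg_zero, exp_zero]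
    ring_nf
  _ = _ := by
    rw [exp_neg_sub_sub_exp_neg_add, exp_neg_sub_sub_exp_neg_add,
      mul_div_mul_left _ _ (exp_pos _).ne']

lemma rotation_zero (ω : ℝ) :
    !![cos (ω * 0), -sin (ω * 0); sin (ω * 0), cos (ω * 0)] = 1 := by
  simp [Matrix.one_fin_two]

lemma Matrix.smul_one_mul_inv_smul_one {n K : Type*} [Fintype n] [DecidableEq n] [Field K]
    {c : K} (hc : c ≠ 0) : (c • 1 : Matrix n n K) * (c⁻¹ • 1) = 1 := by
  rw [smul_mul_smul, mul_one, mul_inv_cancel₀ hc, one_smul]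

theorem stmt18_general (μ ω : ℝ) (hμ : 0 < μ)
    (L : EuclideanSpace ℝ (Fin 2))
    (R : ℝ → Matrix (Fin 2) (Fin 2) ℝ)
    (hR : ∀ t, R t = !![Real.cos (ω * t), -Real.sin (ω * t);
                        Real.sin (ω * t), Real.cos (ω * t)])
    (U : ℝ → ℝ → Matrix (Fin 2) (Fin 2) ℝ)
    (hU : ∀ s r, U s r = (2 / μ * (Real.exp (-(μ * |s - r|)) - Real.exp (-(μ * (s + r)))))
        • R (s - r)) :
    ∀ s t : ℝ, 0 < s → s ≤ t →
      U t t = (2 / μ * (1 - Real.exp (-(2 * μ * t)))) • (1 : Matrix (Fin 2) (Fin 2) ℝ) ∧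
      IsUnit (U t t) ∧
      Matrix.toEuclideanLin (U s t * (U t t)⁻¹) L =
        ((Real.exp (μ * s) - Real.exp (-(μ * s))) /
            (Real.exp (μ * t) - Real.exp (-(μ * t)))) • Matrix.toEuclideanLin (R (s - t)) L := by
  intro s t hs hst
  set c := 2 / μ * (1 - exp (-(2 * μ * t)))
  have hUtt : U t t = c • 1 := by
    rw [hU, hR, sub_self, rotation_zero, abs_zero, mul_zero, neg_zero, exp_zero,
      show μ * (t + t) = 2 * μ * t by ring]
  have hc : c ≠ 0 := by
    have : exp (-(2 * μ * t)) < 1 := exp_lt_one_iff.2 (by nlinarith)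
    exact mul_ne_zero (by positivity) (sub_ne_zero.2 this.ne')
  have hinv := Matrix.smul_one_mul_inv_smul_one (n := Fin 2) hc
  refine ⟨hUtt, hUtt ▸ IsUnit.of_mul_eq_one _ hinv, ?_⟩
  rw [hUtt, Matrix.inv_eq_right_inv hinv, hU, Matrix.mul_smul, Matrix.mul_one, smul_smul,
    map_smul, LinearMap.smul_apply, inv_mul_eq_div,
    mul_div_mul_left _ _ (div_ne_zero two_ne_zero hμ.ne'),
    exp_neg_abs_sub_sub_exp_neg_add_div hst]

/-- The Gaussian conditional-mean formula reproduces the MLT.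
With `U_{sr} = (2/μ)(e^{−μ|s−r|} − e^{−μ(s+r)}) R_{s−r}`, for all `0 < s ≤ t`:
`U_{tt} = (2/μ)(1 − e^{−2μt}) I` is invertible and
`U_{st} U_{tt}⁻¹ L = ((e^{μs} − e^{−μs})/(e^{μt} − e^{−μt})) R_{s−t} L = φ_{s|t}`. -/
theorem stmt18 (μ ω : ℝ) (hμ : 0 < μ)
    (L : EuclideanSpace ℝ (Fin 2)) (hL : L ≠ 0)
    (R : ℝ → Matrix (Fin 2) (Fin 2) ℝ)
    (hR : ∀ t, R t = !![Real.cos (ω * t), -Real.sin (ω * t);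
                        Real.sin (ω * t), Real.cos (ω * t)])
    (U : ℝ → ℝ → Matrix (Fin 2) (Fin 2) ℝ)
    (hU : ∀ s r, U s r = (2 / μ * (Real.exp (-(μ * |s - r|)) - Real.exp (-(μ * (s + r)))))
        • R (s - r)) :
    ∀ s t : ℝ, 0 < s → s ≤ t →
      U t t = (2 / μ * (1 - Real.exp (-(2 * μ * t)))) • (1 : Matrix (Fin 2) (Fin 2) ℝ) ∧
      IsUnit (U t t) ∧
      Matrix.toEuclideanLin (U s t * (U t t)⁻¹) L =
        ((Real.exp (μ * s) - Real.exp (-(μ * s))) /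
            (Real.exp (μ * t) - Real.exp (-(μ * t)))) • Matrix.toEuclideanLin (R (s - t)) L :=
  stmt18_general μ ω hμ L R hR U hU
end
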